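/- arXiv:math/0505307 — 3 statements merged into one kernel-verified Lean document; each statement's English description precedes it below -/
import Mathlib

section
/- Let H₀ and H₁ be complex Hilbert spaces and let Y be a closed linear subspace of X = H₀ ⊕₂ H₁. Then there exist closed subspaces Y₀, Z₀ ⊆ H₀ and Y₁, Z₁ ⊆ H₁ with Z₀ orthogonal to Y₀ in H₀ and Z₁ orthogonal to Y₁ in H₁, and an injective closed linear operator T from Z₀ to Z₁ whose domain is dense in Z₀ and whose range is dense in Z₁, such that Y is the internal orthogonal direct sum of the three pairwise orthogonal closed subspaces Y₀ × {0}, {0} × Y₁ and G(T) of X; that is, these three subspaces are mutually orthogonal, contained in Y, and their (closed) sum equals Y. -/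
open scoped InnerProductSpace

variable {H₀ H₁ : Type*} [NormedAddCommGroup H₀] [InnerProductSpace ℂ H₀] [CompleteSpace H₀]
  [NormedAddCommGroup H₁] [InnerProductSpace ℂ H₁] [CompleteSpace H₁]

/-- The subspace `Y₀ × {0}` of `H₀ ⊕₂ H₁`. -/
noncomputable def embed0 (Y₀ : Submodule ℂ H₀) : Submodule ℂ (WithLp 2 (H₀ × H₁)) :=
  (Y₀.prod (⊥ : Submodule ℂ H₁)).comap (WithLp.linearEquiv 2 ℂ (H₀ × H₁)).toLinearMap

/-- The subspace `{0} × Y₁` of `H₀ ⊕₂ H₁`. -/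
noncomputable def embed1 (Y₁ : Submodule ℂ H₁) : Submodule ℂ (WithLp 2 (H₀ × H₁)) :=
  ((⊥ : Submodule ℂ H₀).prod Y₁).comap (WithLp.linearEquiv 2 ℂ (H₀ × H₁)).toLinearMap

/-- The graph `G(T) = {(x, T x) : x ∈ dom}` of an operator `T` with domain
`dom ⊆ H₀` and values in `H₁`, as a subspace of `H₀ ⊕₂ H₁`. -/
noncomputable def graphSub (dom : Submodule ℂ H₀) (T : dom →ₗ[ℂ] H₁) :
    Submodule ℂ (WithLp 2 (H₀ × H₁)) :=
  LinearMap.range ((WithLp.linearEquiv 2 ℂ (H₀ × H₁)).symm.toLinearMap ∘ₗ (dom.subtype.prod T))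

/-!
Put `Y₀ = {x | (x, 0) ∈ Y}` and `Y₁ = {y | (0, y) ∈ Y}`. Then `N = Y₀ × Y₁` is a closed subspace
of `Y`, so `Y = N ⊕ M` with `M = Nᗮ ⊓ Y`. A vector of `M` with a vanishing coordinate lies in `N`,
hence is zero: so `M` is the graph of an injective operator `T`, closed since `M` is. Orthogonality
of `M` to `Y₀ × {0}` and `{0} × Y₁` gives `dom T ⊥ Y₀` and `ran T ⊥ Y₁`, and `Z₀`, `Z₁` are the
closures of the domain and the range of `T`.
-/

open WithLp (toLp ofLp)

theorem WithLp.toLp_fst_add_toLp_snd {p : ENNReal} {E F : Type*} [AddCommGroup E]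
    [AddCommGroup F] (v : WithLp p (E × F)) :
    toLp p (v.ofLp.1, 0) + toLp p (0, v.ofLp.2) = v := by
  rw [WithLp.ext_iff]
  simp only [ofLp_add, Prod.mk_add_mk, add_zero, zero_add]

namespace Submodule

section Slices

variable {R E F : Type*} [Semiring R] [AddCommGroup E] [Module R E] [AddCommGroup F]
  [Module R F] {p : ENNReal} (Y : Submodule R (WithLp p (E × F)))

def fstSlice : Submodule R E :=
  Y.comap ((WithLp.linearEquiv p R (E × F)).symm.toLinearMap ∘ₗ LinearMap.inl R E F)

def sndSlice : Submodule R F :=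
  Y.comap ((WithLp.linearEquiv p R (E × F)).symm.toLinearMap ∘ₗ LinearMap.inr R E F)

def sliceProd : Submodule R (WithLp p (E × F)) :=
  (Y.fstSlice.prod Y.sndSlice).comap (WithLp.linearEquiv p R (E × F)).toLinearMap

variable {Y}

theorem sliceProd_le : Y.sliceProd ≤ Y := fun v hv => by
  rw [← v.toLp_fst_add_toLp_snd]
  exact Y.add_mem hv.1 hv.2

theorem mem_sliceProd_of_fst_eq_zero {v : WithLp p (E × F)} (hv : v ∈ Y) (h : v.ofLp.1 = 0) :
    v ∈ Y.sliceProd := by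
  obtain ⟨⟨x, y⟩⟩ := v
  obtain rfl : x = 0 := h
  exact ⟨zero_mem _, hv⟩

theorem mem_sliceProd_of_snd_eq_zero {v : WithLp p (E × F)} (hv : v ∈ Y) (h : v.ofLp.2 = 0) :
    v ∈ Y.sliceProd := by
  obtain ⟨⟨x, y⟩⟩ := v
  obtain rfl : y = 0 := h
  exact ⟨hv, zero_mem _⟩

variable [TopologicalSpace E] [TopologicalSpace F]

theorem isClosed_fstSlice (hY : IsClosed (Y : Set (WithLp p (E × F)))) :
    IsClosed (Y.fstSlice : Set E) :=
  hY.preimage (by fun_prop : Continuous fun x : E => toLp p (x, (0 : F)))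

theorem isClosed_sndSlice (hY : IsClosed (Y : Set (WithLp p (E × F)))) :
    IsClosed (Y.sndSlice : Set F) :=
  hY.preimage (by fun_prop : Continuous fun y : F => toLp p ((0 : E), y))

theorem isClosed_sliceProd (hY : IsClosed (Y : Set (WithLp p (E × F)))) :
    IsClosed (Y.sliceProd : Set (WithLp p (E × F))) :=
  ((isClosed_fstSlice hY).prod (isClosed_sndSlice hY)).preimage (WithLp.prod_continuous_ofLp p E F)

end Slices

section Graph

variable {𝕜 E F : Type*} [RCLike 𝕜] [NormedAddCommGroup E] [InnerProductSpace 𝕜 E]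
  [NormedAddCommGroup F] [InnerProductSpace 𝕜 F]

theorem isOrtho_topologicalClosure_left {K L : Submodule 𝕜 E} :
    K.topologicalClosure ⟂ L ↔ K ⟂ L := by
  rw [isOrtho_comm, isOrtho_iff_le, orthogonal_closure, ← isOrtho_iff_le, isOrtho_comm]

variable (Y : Submodule 𝕜 (WithLp 2 (E × F)))

noncomputable def graphPart : Submodule 𝕜 (WithLp 2 (E × F)) := Y.sliceProdᗮ ⊓ Y

noncomputable def graphPartOp : E →ₗ.[𝕜] F :=
  (Y.graphPart.map (WithLp.linearEquiv 2 𝕜 (E × F)).toLinearMap).toLinearPMap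

variable {Y}

theorem fst_mem_orthogonal_fstSlice {v : WithLp 2 (E × F)} (hv : v ∈ Y.sliceProdᗮ) :
    v.ofLp.1 ∈ Y.fstSliceᗮ := fun x hx => by
  simpa using hv (toLp 2 (x, 0)) ⟨hx, zero_mem _⟩

theorem snd_mem_orthogonal_sndSlice {v : WithLp 2 (E × F)} (hv : v ∈ Y.sliceProdᗮ) :
    v.ofLp.2 ∈ Y.sndSliceᗮ := fun y hy => by
  simpa using hv (toLp 2 (0, y)) ⟨zero_mem _, hy⟩

theorem eq_zero_of_mem_graphPart_of_fst_eq_zero {v : WithLp 2 (E × F)} (hv : v ∈ Y.graphPart)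
    (h : v.ofLp.1 = 0) : v = 0 :=
  disjoint_def.mp Y.sliceProd.orthogonal_disjoint v (mem_sliceProd_of_fst_eq_zero hv.2 h) hv.1

theorem eq_zero_of_mem_graphPart_of_snd_eq_zero {v : WithLp 2 (E × F)} (hv : v ∈ Y.graphPart)
    (h : v.ofLp.2 = 0) : v = 0 :=
  disjoint_def.mp Y.sliceProd.orthogonal_disjoint v (mem_sliceProd_of_snd_eq_zero hv.2 h) hv.1

theorem graph_graphPartOp :
    Y.graphPartOp.graph = Y.graphPart.map (WithLp.linearEquiv 2 𝕜 (E × F)).toLinearMap := by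
  refine toLinearPMap_graph_eq _ ?_
  rintro _ ⟨v, hv, rfl⟩ h
  simp [eq_zero_of_mem_graphPart_of_fst_eq_zero hv h]

theorem toLp_mem_graphPart (x : Y.graphPartOp.domain) :
    toLp 2 ((x : E), Y.graphPartOp x) ∈ Y.graphPart := by
  have hx := Y.graphPartOp.mem_graph x
  rw [graph_graphPartOp] at hx
  obtain ⟨v, hv, hvx⟩ := hx
  rwa [← hvx]

theorem domain_graphPartOp_isOrtho : Y.graphPartOp.domain ⟂ Y.fstSlice :=
  isOrtho_iff_le.mpr fun x hx => by
    simpa using fst_mem_orthogonal_fstSlice (toLp_mem_graphPart ⟨x, hx⟩).1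

theorem range_graphPartOp_isOrtho : LinearMap.range Y.graphPartOp.toFun ⟂ Y.sndSlice := by
  rw [isOrtho_iff_le]
  rintro _ ⟨x, rfl⟩
  simpa using snd_mem_orthogonal_sndSlice (toLp_mem_graphPart x).1

theorem injective_graphPartOp : Function.Injective Y.graphPartOp.toFun := by
  rw [← LinearMap.ker_eq_bot, LinearMap.ker_eq_bot']
  intro x hx
  have := eq_zero_of_mem_graphPart_of_snd_eq_zero (toLp_mem_graphPart x) hx
  exact Subtype.ext (congrArg (fun v => v.ofLp.1) this)

theorem isClosed_graphPart (hY : IsClosed (Y : Set (WithLp 2 (E × F)))) :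
    IsClosed (Y.graphPart : Set (WithLp 2 (E × F))) :=
  Y.sliceProd.isClosed_orthogonal.inter hY

theorem sliceProd_isOrtho_graphPart : Y.sliceProd ⟂ Y.graphPart :=
  (isOrtho_iff_le.mpr inf_le_left).symm

theorem sliceProd_sup_graphPart [Y.sliceProd.HasOrthogonalProjection] :
    Y.sliceProd ⊔ Y.graphPart = Y :=
  sup_orthogonal_inf_of_hasOrthogonalProjection sliceProd_le

end Graph

end Submodule

open Submodule

section Decomposition

variable {E F : Type*} [NormedAddCommGroup E] [InnerProductSpace ℂ E] [NormedAddCommGroup F]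
  [InnerProductSpace ℂ F]

theorem graphSub_eq_comap_graph (f : E →ₗ.[ℂ] F) :
    graphSub f.domain f.toFun = f.graph.comap (WithLp.linearEquiv 2 ℂ (E × F)).toLinearMap := by
  ext v
  simp only [graphSub, LinearMap.mem_range, mem_comap, LinearPMap.mem_graph_iff]
  constructor
  · rintro ⟨x, rfl⟩
    exact ⟨x, rfl, rfl⟩
  · rintro ⟨x, hx1, hx2⟩
    exact ⟨x, WithLp.ofLp_injective _ (Prod.ext hx1 hx2)⟩

theorem graphSub_graphPartOp (Y : Submodule ℂ (WithLp 2 (E × F))) :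
    graphSub Y.graphPartOp.domain Y.graphPartOp.toFun = Y.graphPart := by
  rw [graphSub_eq_comap_graph, graph_graphPartOp]
  exact comap_map_eq_of_injective (WithLp.linearEquiv 2 ℂ (E × F)).injective _

theorem embed0_sup_embed1 (Y₀ : Submodule ℂ E) (Y₁ : Submodule ℂ F) :
    embed0 Y₀ ⊔ embed1 Y₁ = (Y₀.prod Y₁).comap (WithLp.linearEquiv 2 ℂ (E × F)).toLinearMap := by
  refine le_antisymm (sup_le (comap_mono (prod_mono le_rfl bot_le))
    (comap_mono (prod_mono bot_le le_rfl))) fun v hv => ?_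
  rw [← v.toLp_fst_add_toLp_snd]
  exact add_mem_sup ⟨hv.1, rfl⟩ ⟨rfl, hv.2⟩

theorem embed0_isOrtho_embed1 (Y₀ : Submodule ℂ E) (Y₁ : Submodule ℂ F) :
    embed0 (H₁ := F) Y₀ ⟂ embed1 (H₀ := E) Y₁ := by
  rw [isOrtho_iff_inner_eq]
  rintro ⟨a₀, a₁⟩ ⟨-, ha₁⟩ ⟨b₀, b₁⟩ ⟨hb₀, -⟩
  simp_all

end Decomposition

/-- Every closed subspace `Y` of `X = H₀ ⊕₂ H₁` is the internal orthogonal direct sum of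
three pairwise orthogonal closed subspaces `Y₀ × {0}`, `{0} × Y₁` and `G(T)`, where
`Y₀, Z₀ ⊆ H₀`, `Y₁, Z₁ ⊆ H₁` are closed subspaces with `Z₀ ⊥ Y₀`, `Z₁ ⊥ Y₁`, and `T` is an
injective closed densely defined operator from `Z₀` to `Z₁` with dense range. -/
theorem stmt_0 (Y : Submodule ℂ (WithLp 2 (H₀ × H₁)))
    (hY : IsClosed (Y : Set (WithLp 2 (H₀ × H₁)))) :
    ∃ (Y₀ Z₀ : Submodule ℂ H₀) (Y₁ Z₁ : Submodule ℂ H₁)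
      (dom : Submodule ℂ H₀) (T : dom →ₗ[ℂ] H₁),
      -- the four subspaces are closed
      IsClosed (Y₀ : Set H₀) ∧ IsClosed (Z₀ : Set H₀) ∧
      IsClosed (Y₁ : Set H₁) ∧ IsClosed (Z₁ : Set H₁) ∧
      -- `Z₀` is orthogonal to `Y₀` in `H₀`, and `Z₁` is orthogonal to `Y₁` in `H₁`
      (∀ z ∈ Z₀, ∀ y ∈ Y₀, ⟪z, y⟫_ℂ = 0) ∧
      (∀ z ∈ Z₁, ∀ y ∈ Y₁, ⟪z, y⟫_ℂ = 0) ∧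
      -- `T` is an injective operator from `Z₀` to `Z₁` with dense domain and dense range
      Function.Injective T ∧
      dom ≤ Z₀ ∧ dom.topologicalClosure = Z₀ ∧
      LinearMap.range T ≤ Z₁ ∧ (LinearMap.range T).topologicalClosure = Z₁ ∧
      -- `T` is closed, i.e. its graph is closed in `X`
      IsClosed ((graphSub dom T : Submodule ℂ (WithLp 2 (H₀ × H₁))) :
        Set (WithLp 2 (H₀ × H₁))) ∧
      -- the three subspaces `Y₀ × {0}`, `{0} × Y₁` and `G(T)` are pairwise orthogonal
      (∀ a ∈ embed0 (H₁ := H₁) Y₀, ∀ b ∈ embed1 (H₀ := H₀) Y₁, ⟪a, b⟫_ℂ = 0) ∧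
      (∀ a ∈ embed0 (H₁ := H₁) Y₀, ∀ b ∈ graphSub dom T, ⟪a, b⟫_ℂ = 0) ∧
      (∀ a ∈ embed1 (H₀ := H₀) Y₁, ∀ b ∈ graphSub dom T, ⟪a, b⟫_ℂ = 0) ∧
      -- they are contained in `Y` and their sum is `Y`
      embed0 (H₁ := H₁) Y₀ ≤ Y ∧ embed1 (H₀ := H₀) Y₁ ≤ Y ∧ graphSub dom T ≤ Y ∧
      embed0 (H₁ := H₁) Y₀ ⊔ embed1 (H₀ := H₀) Y₁ ⊔ graphSub dom T = Y := by
  have : CompleteSpace Y.sliceProd := (isClosed_sliceProd hY).completeSpace_coe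
  have hgraph := graphSub_graphPartOp Y
  have hslices : embed0 Y.fstSlice ⊔ embed1 Y.sndSlice = Y.sliceProd := embed0_sup_embed1 _ _
  have hfst : embed0 Y.fstSlice ≤ Y.sliceProd := hslices ▸ le_sup_left
  have hsnd : embed1 Y.sndSlice ≤ Y.sliceProd := hslices ▸ le_sup_right
  refine ⟨Y.fstSlice, Y.graphPartOp.domain.topologicalClosure, Y.sndSlice,
    (LinearMap.range Y.graphPartOp.toFun).topologicalClosure, Y.graphPartOp.domain,
    Y.graphPartOp.toFun, isClosed_fstSlice hY, isClosed_topologicalClosure _,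
    isClosed_sndSlice hY, isClosed_topologicalClosure _,
    isOrtho_iff_inner_eq.mp (isOrtho_topologicalClosure_left.mpr domain_graphPartOp_isOrtho),
    isOrtho_iff_inner_eq.mp (isOrtho_topologicalClosure_left.mpr range_graphPartOp_isOrtho),
    injective_graphPartOp, le_topologicalClosure _, rfl, le_topologicalClosure _, rfl,
    hgraph ▸ isClosed_graphPart hY, isOrtho_iff_inner_eq.mp (embed0_isOrtho_embed1 _ _),
    isOrtho_iff_inner_eq.mp (hgraph ▸ sliceProd_isOrtho_graphPart.mono_left hfst),
    isOrtho_iff_inner_eq.mp (hgraph ▸ sliceProd_isOrtho_graphPart.mono_left hsnd),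
    hfst.trans sliceProd_le, hsnd.trans sliceProd_le, hgraph ▸ inf_le_right, ?_⟩
  rw [hslices, hgraph]
  exact sliceProd_sup_graphPart
end

section
/- Let n ≥ 1, 0 < θ < 1, let α and β be positive definite n×n complex matrices, and let x be any n×n complex matrix. Then ∫₀^∞ t^{−2θ−1} [ inf_{y} ( ‖(x − y) β^{1/(1−θ)}‖_F² + t² ‖α^{1/θ} y‖_F² ) ] dt = (π / (2 sin(πθ))) · ‖α x β‖_F², where the infimum runs over all n×n complex matrices y, ‖·‖_F is the Frobenius (Hilbert–Schmidt) norm, and the real powers of α and β are taken in the sense of positive definite matrices. -/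
open scoped Matrix ComplexOrder

/-- The real power `α^s` of a Hermitian matrix, defined through its spectral
decomposition `α = U diag(λᵢ) U*` as `α^s = U diag(λᵢ^s) U*`. -/
noncomputable def matRpow {n : ℕ} {α : Matrix (Fin n) (Fin n) ℂ}
    (hα : α.IsHermitian) (s : ℝ) : Matrix (Fin n) (Fin n) ℂ :=
  (hα.eigenvectorUnitary : Matrix (Fin n) (Fin n) ℂ) *
    Matrix.diagonal (fun i => ((hα.eigenvalues i ^ s : ℝ) : ℂ)) *
    star (hα.eigenvectorUnitary : Matrix (Fin n) (Fin n) ℂ)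

/-- The squared Frobenius (Hilbert–Schmidt) norm `‖x‖_F² = Tr(x* x)` of a complex matrix. -/
noncomputable def frobSq {n : ℕ} (x : Matrix (Fin n) (Fin n) ℂ) : ℝ :=
  (Matrix.trace (xᴴ * x)).re

/-!
Write `α = U diag(aᵢ) U*`, `β = V diag(bⱼ) V*` and `w = U* x V`. In these coordinates both
Frobenius norms are weighted sums over the matrix entries, so the infimum over `y` splits into the
scalar problems `inf_z (p |w - z|² + q |z|²) = pq/(p+q) |w|²`, with `p = bⱼ^{2/(1-θ)}` and
`q = t² aᵢ^{2/θ}`. After `s = t²` and a rescaling, `∫₀^∞ t^{-2θ-1} pq/(p+q) dt` is half of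
`aᵢ² bⱼ² ∫₀^∞ u^{-θ}/(1+u) du`, and `u = x/(1-x)` turns the last integral into the beta integral
`B(1-θ, θ) = Γ(1-θ) Γ(θ) = π / sin πθ`. Summing `aᵢ² bⱼ² |wᵢⱼ|²` gives `‖α x β‖_F²`.
-/

open MeasureTheory Set Real
open Complex (normSq)

theorem integral_rpow_neg_mul_one_sub_rpow {θ : ℝ} (h0 : 0 < θ) (h1 : θ < 1) :
    ∫ x in (0:ℝ)..1, x ^ (-θ) * (1 - x) ^ (θ - 1) = π / sin (π * θ) := by
  have hB := Complex.Gamma_mul_Gamma_eq_betaIntegral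
    (s := ((1 - θ : ℝ) : ℂ)) (t := (θ : ℂ)) (by simpa using h1) (by simpa using h0)
  rw [show ((1 - θ : ℝ) : ℂ) + θ = 1 by push_cast; ring, Complex.Gamma_one, one_mul,
    Complex.Gamma_ofReal, Complex.Gamma_ofReal, mul_comm, ← Complex.ofReal_mul,
    Real.Gamma_mul_Gamma_one_sub, Complex.betaIntegral] at hB
  rw [← Complex.ofReal_inj, hB, ← intervalIntegral.integral_ofReal]
  refine intervalIntegral.integral_congr fun x hx => ?_
  rw [uIcc_of_le zero_le_one] at hx
  rw [Complex.ofReal_mul, Complex.ofReal_cpow hx.1, Complex.ofReal_cpow (sub_nonneg.2 hx.2)]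
  push_cast
  ring_nf

theorem integral_Ioi_rpow_neg_div_one_add {θ : ℝ} (h0 : 0 < θ) (h1 : θ < 1) :
    ∫ u in Ioi (0:ℝ), u ^ (-θ) / (1 + u) = π / sin (π * θ) := by
  have hbij : BijOn (fun x : ℝ => x / (1 - x)) (Ioo 0 1) (Ioi 0) := by
    refine InvOn.bijOn (f' := fun u => u / (1 + u)) ⟨fun x hx => ?_, fun u hu => ?_⟩
      (fun x hx => ?_) (fun u hu => ?_)
    · have : 1 - x ≠ 0 := by linarith [hx.2]
      field_simp
      ring
    · have : 1 + u ≠ 0 := by linarith [mem_Ioi.1 hu]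
      field_simp
      ring
    · exact div_pos hx.1 (by linarith [hx.2])
    · have hu : (0:ℝ) < u := hu
      exact ⟨by positivity, (div_lt_one (by linarith)).2 (by linarith)⟩
  have hderiv : ∀ x ∈ Ioo (0:ℝ) 1,
      HasDerivWithinAt (fun x => x / (1 - x)) ((1 - x) ^ 2)⁻¹ (Ioo 0 1) x := by
    intro x hx
    have hx1 : 1 - x ≠ 0 := by linarith [hx.2]
    have : HasDerivAt (fun x => x / (1 - x)) ((1 * (1 - x) - x * -1) / (1 - x) ^ 2) x :=
      (hasDerivAt_id x).div ((hasDerivAt_id x).const_sub 1) hx1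
    exact this.hasDerivWithinAt.congr_deriv (by field_simp; ring)
  rw [← hbij.image_eq, integral_image_eq_integral_abs_deriv_smul measurableSet_Ioo hderiv
    hbij.injOn, ← integral_rpow_neg_mul_one_sub_rpow h0 h1,
    intervalIntegral.integral_of_le zero_le_one, integral_Ioc_eq_integral_Ioo]
  refine setIntegral_congr_fun measurableSet_Ioo fun x ⟨hx0, hx1⟩ => ?_
  have h1x : 0 < 1 - x := by linarith
  rw [smul_eq_mul, abs_of_nonneg (by positivity), div_rpow hx0.le h1x.le, rpow_sub h1x, rpow_one,
    rpow_neg h1x.le]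
  field_simp
  ring

theorem integral_Ioi_rpow_mul_mul_div_add {θ a b : ℝ} (h0 : 0 < θ) (h1 : θ < 1) (ha : 0 < a)
    (hb : 0 < b) :
    ∫ t in Ioi (0:ℝ), t ^ (-2 * θ - 1) * (b * (t ^ 2 * a) / (b + t ^ 2 * a))
      = π / (2 * sin (π * θ)) * (a ^ θ * b ^ (1 - θ)) := by
  have hk : 0 < a / b := div_pos ha hb
  have hscaled : ∫ s in Ioi (0:ℝ), s ^ (-θ) / (1 + a / b * s)
      = (a / b) ^ (θ - 1) * (π / sin (π * θ)) := by
    have := integral_comp_mul_left_Ioi (fun u => u ^ (-θ) / (1 + u)) 0 hk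
    rw [mul_zero, integral_Ioi_rpow_neg_div_one_add h0 h1, smul_eq_mul] at this
    rw [rpow_sub_one hk.ne', div_eq_mul_inv _ (a / b), mul_assoc, ← this, ← integral_const_mul]
    refine setIntegral_congr_fun measurableSet_Ioi fun s (hs : 0 < s) => ?_
    rw [mul_rpow hk.le hs.le, rpow_neg hk.le]
    field_simp
  have hsq := integral_comp_rpow_Ioi_of_pos (g := fun s => a / 2 * (s ^ (-θ) / (1 + a / b * s)))
    two_pos
  rw [integral_const_mul, hscaled] at hsq
  have hconst : a / 2 * ((a / b) ^ (θ - 1) * (π / sin (π * θ)))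
      = π / (2 * sin (π * θ)) * (a ^ θ * b ^ (1 - θ)) := by
    rw [div_rpow ha.le hb.le, rpow_sub_one ha.ne', rpow_sub_one hb.ne', rpow_sub hb, rpow_one]
    field_simp
  rw [← hconst, ← hsq]
  refine setIntegral_congr_fun measurableSet_Ioi fun t (ht : 0 < t) => ?_
  rw [smul_eq_mul, ← rpow_mul ht.le, rpow_two, show (2:ℝ) - 1 = 1 by norm_num, rpow_one,
    show 2 * -θ = -2 * θ - 1 + 1 by ring, rpow_add_one ht.ne']
  field_simp

theorem integrableOn_Ioi_rpow_mul_mul_div_add {θ a b : ℝ} (h0 : 0 < θ) (h1 : θ < 1)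
    (ha : 0 < a) (hb : 0 < b) :
    IntegrableOn (fun t => t ^ (-2 * θ - 1) * (b * (t ^ 2 * a) / (b + t ^ 2 * a))) (Ioi 0) := by
  refine Integrable.of_integral_ne_zero ?_
  rw [integral_Ioi_rpow_mul_mul_div_add h0 h1 ha hb]
  have : 0 < sin (π * θ) := sin_pos_of_pos_of_lt_pi (by positivity) (by nlinarith [pi_pos])
  positivity

theorem integral_Ioi_rpow_mul_sum_sum_mul_div_add {ι κ : Type*} [Fintype ι] [Fintype κ]
    {θ : ℝ} (h0 : 0 < θ) (h1 : θ < 1) {a : ι → ℝ} {b : κ → ℝ} (ha : ∀ i, 0 < a i)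
    (hb : ∀ j, 0 < b j) (c : ι → κ → ℝ) :
    ∫ t in Ioi (0:ℝ), t ^ (-2 * θ - 1) *
        ∑ i, ∑ j, b j * (t ^ 2 * a i) / (b j + t ^ 2 * a i) * c i j
      = π / (2 * sin (π * θ)) * ∑ i, ∑ j, a i ^ θ * b j ^ (1 - θ) * c i j := by
  have hint : ∀ i j, Integrable
      (fun t => t ^ (-2 * θ - 1) * (b j * (t ^ 2 * a i) / (b j + t ^ 2 * a i) * c i j))
      (volume.restrict (Ioi 0)) :=
    fun i j => by
      simpa only [mul_assoc] using
        (integrableOn_Ioi_rpow_mul_mul_div_add h0 h1 (ha i) (hb j)).mul_const (c i j)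
  simp only [Finset.mul_sum]
  rw [integral_finsetSum _ fun i _ => integrable_finsetSum _ fun j _ => hint i j]
  refine Finset.sum_congr rfl fun i _ => ?_
  rw [integral_finsetSum _ fun j _ => hint i j]
  refine Finset.sum_congr rfl fun j _ => ?_
  rw [← mul_assoc (π / _), ← integral_Ioi_rpow_mul_mul_div_add h0 h1 (ha i) (hb j),
    ← integral_mul_const]
  simp only [mul_assoc]

theorem mul_div_add_mul_normSq_le {p q : ℝ} (hpq : 0 < p + q) (u v : ℂ) :
    p * q / (p + q) * normSq u ≤ p * normSq (u - v) + q * normSq v := by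
  rw [div_mul_eq_mul_div, div_le_iff₀ hpq]
  simp only [Complex.normSq_apply, Complex.sub_re, Complex.sub_im]
  nlinarith [sq_nonneg (p * (u.re - v.re) - q * v.re),
    sq_nonneg (p * (u.im - v.im) - q * v.im)]

theorem mul_div_add_mul_normSq_eq {p q : ℝ} (hpq : p + q ≠ 0) (u : ℂ) :
    p * q / (p + q) * normSq u
      = p * normSq (u - (p / (p + q) : ℝ) * u) + q * normSq ((p / (p + q) : ℝ) * u) := by
  rw [← one_sub_mul, Complex.normSq_mul, Complex.normSq_mul, ← Complex.ofReal_one,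
    ← Complex.ofReal_sub, Complex.normSq_ofReal, Complex.normSq_ofReal]
  field_simp
  ring

theorem iInf_sum_mul_normSq_sub_add_mul_normSq {ι κ : Type*} [Fintype ι] [Fintype κ]
    (p q : ι → κ → ℝ) (hpq : ∀ i j, 0 < p i j + q i j) (w : Matrix ι κ ℂ) :
    ⨅ z : Matrix ι κ ℂ,
        ∑ i, ∑ j, (p i j * normSq (w i j - z i j) + q i j * normSq (z i j))
      = ∑ i, ∑ j, p i j * q i j / (p i j + q i j) * normSq (w i j) := by
  refine IsGLB.ciInf_eq (IsLeast.isGLB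
    ⟨⟨Matrix.of fun i j => (p i j / (p i j + q i j) : ℝ) * w i j, ?_⟩, ?_⟩)
  · exact Finset.sum_congr rfl fun i _ => Finset.sum_congr rfl fun j _ =>
      (mul_div_add_mul_normSq_eq (hpq i j).ne' (w i j)).symm
  · rintro _ ⟨z, rfl⟩
    exact Finset.sum_le_sum fun i _ => Finset.sum_le_sum fun j _ =>
      mul_div_add_mul_normSq_le (hpq i j) (w i j) (z i j)

section Frobenius

variable {n : ℕ}

theorem frobSq_eq_sum_normSq (x : Matrix (Fin n) (Fin n) ℂ) :
    frobSq x = ∑ i, ∑ j, normSq (x i j) := by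
  simp only [frobSq, Matrix.trace, Matrix.diag_apply, Matrix.mul_apply,
    Matrix.conjTranspose_apply, Complex.re_sum]
  rw [Finset.sum_comm]
  simp [RCLike.star_def, ← Complex.normSq_eq_conj_mul_self]

theorem frobSq_unitary_mul_mul_star {U V : Matrix (Fin n) (Fin n) ℂ} (hU : U ∈ unitary _)
    (hV : V ∈ unitary _) (M : Matrix (Fin n) (Fin n) ℂ) :
    frobSq (U * M * star V) = frobSq M := by
  have hU' : Uᴴ * U = 1 := Unitary.star_mul_self_of_mem hU
  have hV' : Vᴴ * V = 1 := Unitary.star_mul_self_of_mem hV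
  rw [frobSq, frobSq, Matrix.star_eq_conjTranspose, Matrix.conjTranspose_mul,
    Matrix.conjTranspose_mul, Matrix.conjTranspose_conjTranspose]
  simp only [Matrix.mul_assoc]
  rw [Matrix.trace_mul_comm V]
  simp only [Matrix.mul_assoc]
  rw [hV', Matrix.mul_one, ← Matrix.mul_assoc Uᴴ, hU', Matrix.one_mul]

theorem frobSq_diagonal_mul_mul_diagonal (d e : Fin n → ℝ) (M : Matrix (Fin n) (Fin n) ℂ) :
    frobSq (Matrix.diagonal (fun i => (d i : ℂ)) * M * Matrix.diagonal (fun j => (e j : ℂ)))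
      = ∑ i, ∑ j, d i ^ 2 * e j ^ 2 * normSq (M i j) := by
  simp only [frobSq_eq_sum_normSq, Matrix.mul_diagonal, Matrix.diagonal_mul, Complex.normSq_mul,
    Complex.normSq_ofReal]
  exact Finset.sum_congr rfl fun i _ => Finset.sum_congr rfl fun j _ => by ring

end Frobenius

section EigenCoords

variable {n : ℕ} {A B : Matrix (Fin n) (Fin n) ℂ}

noncomputable def eigenCoords (hA : A.IsHermitian) (hB : B.IsHermitian)
    (M : Matrix (Fin n) (Fin n) ℂ) : Matrix (Fin n) (Fin n) ℂ :=
  star (hA.eigenvectorUnitary : Matrix (Fin n) (Fin n) ℂ) * M * hB.eigenvectorUnitary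

theorem eigenCoords_sub (hA : A.IsHermitian) (hB : B.IsHermitian)
    (M N : Matrix (Fin n) (Fin n) ℂ) :
    eigenCoords hA hB (M - N) = eigenCoords hA hB M - eigenCoords hA hB N := by
  simp only [eigenCoords, Matrix.mul_sub, Matrix.sub_mul]

theorem eigenCoords_surjective (hA : A.IsHermitian) (hB : B.IsHermitian) :
    Function.Surjective (eigenCoords hA hB) := fun z =>
  ⟨hA.eigenvectorUnitary * z * star (hB.eigenvectorUnitary : Matrix (Fin n) (Fin n) ℂ), by
    rw [eigenCoords, ← Matrix.mul_assoc, ← Matrix.mul_assoc, Unitary.coe_star_mul_self,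
      Matrix.one_mul, Matrix.mul_assoc, Unitary.coe_star_mul_self, Matrix.mul_one]⟩

theorem matRpow_zero (hA : A.IsHermitian) : matRpow hA 0 = 1 := by
  simp [matRpow, Unitary.mul_star_self_of_mem hA.eigenvectorUnitary.2]

theorem matRpow_one (hA : A.IsHermitian) : matRpow hA 1 = A := by
  conv_rhs => rw [hA.spectral_theorem]
  simp [matRpow, Unitary.conjStarAlgAut_apply, Function.comp_def]

theorem frobSq_matRpow_mul_mul_matRpow (hA : A.IsHermitian) (hB : B.IsHermitian) (r s : ℝ)
    (M : Matrix (Fin n) (Fin n) ℂ) :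
    frobSq (matRpow hA r * M * matRpow hB s)
      = ∑ i, ∑ j, (hA.eigenvalues i ^ r) ^ 2 * (hB.eigenvalues j ^ s) ^ 2 *
          normSq (eigenCoords hA hB M i j) := by
  rw [← frobSq_diagonal_mul_mul_diagonal]
  conv_rhs => rw [← frobSq_unitary_mul_mul_star hA.eigenvectorUnitary.2 hB.eigenvectorUnitary.2]
  simp only [matRpow, eigenCoords, Matrix.mul_assoc]

theorem frobSq_mul_mul (hA : A.IsHermitian) (hB : B.IsHermitian) (M : Matrix (Fin n) (Fin n) ℂ) :
    frobSq (A * M * B)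
      = ∑ i, ∑ j, hA.eigenvalues i ^ 2 * hB.eigenvalues j ^ 2 *
          normSq (eigenCoords hA hB M i j) := by
  conv_lhs => rw [← matRpow_one hA, ← matRpow_one hB]
  simp only [frobSq_matRpow_mul_mul_matRpow, rpow_one]

theorem iInf_frobSq_sub_mul_matRpow_add_frobSq_matRpow_mul (hA : A.IsHermitian) (hB : B.PosDef)
    (r s t : ℝ) (x : Matrix (Fin n) (Fin n) ℂ) :
    ⨅ y : Matrix (Fin n) (Fin n) ℂ,
        (frobSq ((x - y) * matRpow hB.1 s) + t ^ 2 * frobSq (matRpow hA r * y))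
      = ∑ i, ∑ j, (hB.1.eigenvalues j ^ s) ^ 2 * (t ^ 2 * (hA.eigenvalues i ^ r) ^ 2) /
          ((hB.1.eigenvalues j ^ s) ^ 2 + t ^ 2 * (hA.eigenvalues i ^ r) ^ 2) *
          normSq (eigenCoords hA hB.1 x i j) := by
  have hterm : ∀ y, frobSq ((x - y) * matRpow hB.1 s) + t ^ 2 * frobSq (matRpow hA r * y)
      = ∑ i, ∑ j, ((hB.1.eigenvalues j ^ s) ^ 2 *
            normSq (eigenCoords hA hB.1 x i j - eigenCoords hA hB.1 y i j) +
          t ^ 2 * (hA.eigenvalues i ^ r) ^ 2 * normSq (eigenCoords hA hB.1 y i j)) := by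
    intro y
    -- pad both products to the shape `matRpow hA _ * _ * matRpow hB.1 _`
    rw [← Matrix.one_mul (x - y), ← matRpow_zero hA, ← Matrix.mul_one (matRpow hA r * y),
      ← matRpow_zero hB.1, frobSq_matRpow_mul_mul_matRpow, frobSq_matRpow_mul_mul_matRpow,
      Finset.mul_sum, ← Finset.sum_add_distrib]
    refine Finset.sum_congr rfl fun i _ => ?_
    rw [Finset.mul_sum, ← Finset.sum_add_distrib]
    refine Finset.sum_congr rfl fun j _ => ?_
    rw [eigenCoords_sub, Matrix.sub_apply, rpow_zero, rpow_zero]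
    ring
  have hpos : ∀ i j, 0 < (hB.1.eigenvalues j ^ s) ^ 2 + t ^ 2 * (hA.eigenvalues i ^ r) ^ 2 :=
    fun i j => by have := hB.eigenvalues_pos j; positivity
  rw [iInf_congr hterm, (eigenCoords_surjective hA hB.1).iInf_comp fun z => ∑ i, ∑ j,
      ((hB.1.eigenvalues j ^ s) ^ 2 * normSq (eigenCoords hA hB.1 x i j - z i j) +
        t ^ 2 * (hA.eigenvalues i ^ r) ^ 2 * normSq (z i j)),
    iInf_sum_mul_normSq_sub_add_mul_normSq _ _ hpos]

end EigenCoords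

theorem stmt_10_general {n : ℕ} (θ : ℝ) (hθ : θ ∈ Set.Ioo (0 : ℝ) 1)
    (α β : Matrix (Fin n) (Fin n) ℂ) (hα : α.PosDef) (hβ : β.PosDef)
    (x : Matrix (Fin n) (Fin n) ℂ) :
    ∫ t in Set.Ioi (0 : ℝ),
        t ^ (-2 * θ - 1) *
          ⨅ y : Matrix (Fin n) (Fin n) ℂ,
            (frobSq ((x - y) * matRpow hβ.1 (1 / (1 - θ))) +
              t ^ 2 * frobSq (matRpow hα.1 (1 / θ) * y))
      = Real.pi / (2 * Real.sin (Real.pi * θ)) * frobSq (α * x * β) := by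
  obtain ⟨hθ0, hθ1⟩ := hθ
  have hpow : ∀ {e s : ℝ}, 0 < e → s ≠ 0 → ((e ^ (1 / s)) ^ 2) ^ s = e ^ 2 :=
    fun he hs => by
      rw [← rpow_natCast, ← rpow_mul he.le, ← rpow_mul he.le, ← rpow_natCast]
      field_simp
  simp only [iInf_frobSq_sub_mul_matRpow_add_frobSq_matRpow_mul hα.1 hβ]
  rw [integral_Ioi_rpow_mul_sum_sum_mul_div_add hθ0 hθ1
      (fun i => by have := hα.eigenvalues_pos i; positivity)
      (fun j => by have := hβ.eigenvalues_pos j; positivity),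
    frobSq_mul_mul hα.1 hβ.1]
  congr 1
  refine Finset.sum_congr rfl fun i _ => Finset.sum_congr rfl fun j _ => ?_
  rw [hpow (hα.eigenvalues_pos i) hθ0.ne', hpow (hβ.eigenvalues_pos j) (by linarith)]

/-- For positive definite `n×n` matrices `α, β`, `0 < θ < 1`, and any matrix `x`:
`∫₀^∞ t^{-2θ-1} inf_y (‖(x-y) β^{1/(1-θ)}‖_F² + t² ‖α^{1/θ} y‖_F²) dt
  = (π / (2 sin πθ)) ‖α x β‖_F²`. -/
theorem stmt_10 {n : ℕ} (hn : 1 ≤ n) (θ : ℝ) (hθ : θ ∈ Set.Ioo (0 : ℝ) 1)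
    (α β : Matrix (Fin n) (Fin n) ℂ) (hα : α.PosDef) (hβ : β.PosDef)
    (x : Matrix (Fin n) (Fin n) ℂ) :
    ∫ t in Set.Ioi (0 : ℝ),
        t ^ (-2 * θ - 1) *
          ⨅ y : Matrix (Fin n) (Fin n) ℂ,
            (frobSq ((x - y) * matRpow hβ.1 (1 / (1 - θ))) +
              t ^ 2 * frobSq (matRpow hα.1 (1 / θ) * y))
      = Real.pi / (2 * Real.sin (Real.pi * θ)) * frobSq (α * x * β) :=
  stmt_10_general θ hθ α β hα hβ x
end

section
/- Let (Ω, μ) be a σ-finite measure space, let w : Ω → (0, ∞) be measurable, let 0 < θ < 1, and let f ∈ L²(μ). Then, as an identity in [0, ∞], ∫₀^∞ t^{−2θ−1} [ inf { ‖f − g‖_{L²(μ)}² + t² ‖w g‖_{L²(μ)}² : g measurable with g ∈ L²(μ) and w g ∈ L²(μ) } ] dt = (π / (2 sin(πθ))) ∫_Ω w^{2θ} |f|² dμ. -/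
open MeasureTheory
open scoped ENNReal

/-!
For fixed `t` the infimum decouples pointwise: over `y`, `‖x - y‖² + a ‖y‖²` is minimised at
`y = x / (1 + a)` with value `a / (1 + a) ‖x‖²`, so with `a = (t w)²` the infimum equals
`∫ (t w)² / (1 + (t w)²) |f|² dμ`. After Tonelli, the substitutions `s = t w`, `s = √u` and
`u = y / (1 - y)` turn the remaining `t`-integral into `w^{2θ}` times the Beta integral
`B(1 - θ, θ) = Γ(1 - θ) Γ(θ) = π / sin πθ`.
-/

open Set Real

theorem integral_Ioo_rpow_mul_one_sub_rpow {a b : ℝ} (ha : 0 < a) (hb : 0 < b) :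
    ∫ y in Ioo (0 : ℝ) 1, y ^ (a - 1) * (1 - y) ^ (b - 1) = Gamma a * Gamma b / Gamma (a + b) := by
  have hbeta := Complex.Gamma_mul_Gamma_eq_betaIntegral (s := a) (t := b)
    (by simpa using ha) (by simpa using hb)
  have hcast : Complex.betaIntegral a b
      = ↑(∫ y in Ioo (0 : ℝ) 1, y ^ (a - 1) * (1 - y) ^ (b - 1)) := by
    rw [Complex.betaIntegral, intervalIntegral.integral_of_le zero_le_one,
      integral_Ioc_eq_integral_Ioo, ← integral_complex_ofReal]
    refine setIntegral_congr_fun measurableSet_Ioo fun y hy => ?_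
    rw [Complex.ofReal_mul, Complex.ofReal_cpow hy.1.le, Complex.ofReal_cpow (by linarith [hy.2])]
    push_cast
    rfl
  rw [hcast, ← Complex.ofReal_add, Complex.Gamma_ofReal, Complex.Gamma_ofReal,
    Complex.Gamma_ofReal] at hbeta
  rw [eq_div_iff (Gamma_pos_of_pos (add_pos ha hb)).ne', mul_comm]
  exact_mod_cast hbeta.symm

theorem integral_Ioi_rpow_neg_mul_one_add_inv {θ : ℝ} (hθ₀ : 0 < θ) (hθ₁ : θ < 1) :
    ∫ u in Ioi (0 : ℝ), u ^ (-θ) * (1 + u)⁻¹ = π / sin (π * θ) := by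
  have hderiv : ∀ y ∈ Ioo (0 : ℝ) 1,
      HasDerivWithinAt (fun y => y / (1 - y)) ((1 - y) ^ 2)⁻¹ (Ioo 0 1) y := by
    intro y hy
    have hy₁ : 1 - y ≠ 0 := by linarith [hy.2]
    refine (((hasDerivAt_id' y).div ((hasDerivAt_const y 1).sub (hasDerivAt_id' y)) hy₁)
      |>.hasDerivWithinAt).congr_deriv ?_
    simp only [Pi.sub_apply]
    ring
  have hinj : InjOn (fun y : ℝ => y / (1 - y)) (Ioo 0 1) := by
    intro y hy z hz h
    have : 1 - y ≠ 0 := by linarith [hy.2]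
    have : 1 - z ≠ 0 := by linarith [hz.2]
    field_simp at h
    linarith
  have himage : (fun y : ℝ => y / (1 - y)) '' Ioo 0 1 = Ioi 0 := by
    refine Subset.antisymm ?_ fun u (hu : 0 < u) => ⟨u / (1 + u), ⟨by positivity, ?_⟩, ?_⟩
    · rintro _ ⟨y, hy, rfl⟩
      exact div_pos hy.1 (by linarith [hy.2])
    · rw [div_lt_one (by positivity)]; linarith
    · field_simp; ring
  have hbeta := integral_Ioo_rpow_mul_one_sub_rpow (sub_pos.2 hθ₁) hθ₀
  rw [sub_add_cancel, Gamma_one, div_one, mul_comm, Gamma_mul_Gamma_one_sub] at hbeta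
  rw [← hbeta, ← himage, integral_image_eq_integral_abs_deriv_smul measurableSet_Ioo hderiv hinj]
  refine setIntegral_congr_fun measurableSet_Ioo fun y hy => ?_
  have hy₀ : 0 < y := hy.1
  have hy₁ : 0 < 1 - y := by linarith [hy.2]
  have hsum : 1 + y / (1 - y) = (1 - y)⁻¹ := by field_simp; ring
  rw [smul_eq_mul, abs_of_pos (by positivity), div_rpow hy₀.le hy₁.le, hsum, inv_inv,
    sub_sub_cancel_left, rpow_sub hy₁, rpow_one, rpow_neg hy₁.le]
  field_simp

theorem integral_Ioi_rpow_mul_sq_div_one_add_sq {θ : ℝ} (hθ₀ : 0 < θ) (hθ₁ : θ < 1) :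
    ∫ s in Ioi (0 : ℝ), s ^ (-2 * θ - 1) * (s ^ 2 / (1 + s ^ 2)) = π / (2 * sin (π * θ)) := by
  have h := integral_comp_rpow_Ioi_of_pos (g := fun u => u ^ (-θ) * (1 + u)⁻¹) two_pos
  have hintegrand : ∀ x ∈ Ioi (0 : ℝ), ((2 : ℝ) * x ^ ((2 : ℝ) - 1)) •
      ((x ^ (2 : ℝ)) ^ (-θ) * (1 + x ^ (2 : ℝ))⁻¹)
        = 2 * (x ^ (-2 * θ - 1) * (x ^ 2 / (1 + x ^ 2))) := by
    intro x (hx : 0 < x)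
    rw [smul_eq_mul, ← rpow_mul hx.le, rpow_two, rpow_sub_one hx.ne' (-2 * θ), mul_neg, ← neg_mul]
    norm_num
    field_simp
  rw [setIntegral_congr_fun measurableSet_Ioi hintegrand, integral_const_mul,
    integral_Ioi_rpow_neg_mul_one_add_inv hθ₀ hθ₁] at h
  rw [mul_comm 2, ← div_div, ← h]
  ring

theorem integral_Ioi_rpow_mul_mul_sq_div_one_add_mul_sq {θ b : ℝ} (hθ₀ : 0 < θ) (hθ₁ : θ < 1)
    (hb : 0 < b) :
    ∫ t in Ioi (0 : ℝ), t ^ (-2 * θ - 1) * ((t * b) ^ 2 / (1 + (t * b) ^ 2))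
      = π / (2 * sin (π * θ)) * b ^ (2 * θ) := by
  have h := integral_comp_mul_right_Ioi (fun s => s ^ (-2 * θ - 1) * (s ^ 2 / (1 + s ^ 2))) 0 hb
  have hintegrand : ∀ t ∈ Ioi (0 : ℝ), t ^ (-2 * θ - 1) * ((t * b) ^ 2 / (1 + (t * b) ^ 2))
      = b ^ (2 * θ + 1) * ((t * b) ^ (-2 * θ - 1) * ((t * b) ^ 2 / (1 + (t * b) ^ 2))) := by
    intro t (ht : 0 < t)
    rw [mul_rpow ht.le hb.le, ← mul_assoc, ← mul_assoc, mul_comm (b ^ _), mul_assoc (t ^ _),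
      ← rpow_add hb]
    norm_num
  rw [zero_mul, integral_Ioi_rpow_mul_sq_div_one_add_sq hθ₀ hθ₁, smul_eq_mul] at h
  rw [setIntegral_congr_fun measurableSet_Ioi hintegrand, integral_const_mul, h,
    rpow_add hb, rpow_one]
  field_simp

theorem lintegral_Ioi_rpow_mul_mul_sq_div_one_add_mul_sq {θ b : ℝ} (hθ₀ : 0 < θ) (hθ₁ : θ < 1)
    (hb : 0 < b) :
    ∫⁻ t in Ioi (0 : ℝ), ENNReal.ofReal (t ^ (-2 * θ - 1)) *
        ENNReal.ofReal ((t * b) ^ 2 / (1 + (t * b) ^ 2))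
      = ENNReal.ofReal (π / (2 * sin (π * θ))) * ENNReal.ofReal (b ^ (2 * θ)) := by
  have hsin : 0 < sin (π * θ) :=
    sin_pos_of_pos_of_lt_pi (by positivity) (by nlinarith [pi_pos])
  have hintegral := integral_Ioi_rpow_mul_mul_sq_div_one_add_mul_sq hθ₀ hθ₁ hb
  -- A non-integrable function has Bochner integral `0`, so the value computed above
  -- already proves integrability.
  have hintegrable : IntegrableOn
      (fun t => t ^ (-2 * θ - 1) * ((t * b) ^ 2 / (1 + (t * b) ^ 2))) (Ioi 0) :=
    Integrable.of_integral_ne_zero (by rw [hintegral]; positivity)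
  have hnonneg : 0 ≤ᵐ[volume.restrict (Ioi 0)]
      fun t : ℝ => t ^ (-2 * θ - 1) * ((t * b) ^ 2 / (1 + (t * b) ^ 2)) := by
    filter_upwards [ae_restrict_mem measurableSet_Ioi] with t (ht : 0 < t)
    positivity
  rw [← ENNReal.ofReal_mul (by positivity), ← hintegral,
    ofReal_integral_eq_lintegral_ofReal hintegrable hnonneg]
  refine setLIntegral_congr_fun measurableSet_Ioi fun t (ht : 0 < t) => ?_
  rw [ENNReal.ofReal_mul (by positivity)]

theorem le_norm_sub_sq_add_mul_norm_sq {E : Type*} [SeminormedAddCommGroup E] {a : ℝ} (ha : 0 ≤ a)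
    (x y : E) : a / (1 + a) * ‖x‖ ^ 2 ≤ ‖x - y‖ ^ 2 + a * ‖y‖ ^ 2 := by
  have htri : ‖x‖ ≤ ‖x - y‖ + ‖y‖ := by linarith [norm_sub_norm_le x y]
  calc a / (1 + a) * ‖x‖ ^ 2 ≤ a / (1 + a) * (‖x - y‖ + ‖y‖) ^ 2 := by gcongr
    _ ≤ ‖x - y‖ ^ 2 + a * ‖y‖ ^ 2 := by
      rw [div_mul_eq_mul_div, div_le_iff₀ (by positivity)]
      nlinarith [sq_nonneg (‖x - y‖ - a * ‖y‖)]

theorem norm_sub_inv_one_add_smul_sq_add {E : Type*} [SeminormedAddCommGroup E] [NormedSpace ℝ E]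
    {a : ℝ} (ha : 0 ≤ a) (x : E) :
    ‖x - (1 + a)⁻¹ • x‖ ^ 2 + a * ‖(1 + a)⁻¹ • x‖ ^ 2 = a / (1 + a) * ‖x‖ ^ 2 := by
  have h1a : 0 < 1 + a := by positivity
  have hsub : x - (1 + a)⁻¹ • x = (a / (1 + a)) • x := by
    rw [show a / (1 + a) = 1 - (1 + a)⁻¹ by field_simp; ring, sub_smul, one_smul]
  rw [hsub, norm_smul, norm_smul, Real.norm_of_nonneg (by positivity),
    Real.norm_of_nonneg (by positivity)]
  field_simp
  ring

theorem coe_nnnorm_sq_eq_ofReal {E : Type*} [SeminormedAddCommGroup E] (x : E) :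
    (‖x‖₊ : ℝ≥0∞) ^ 2 = ENNReal.ofReal (‖x‖ ^ 2) := by
  rw [ENNReal.ofReal_pow (norm_nonneg x), ← coe_nnnorm, ENNReal.ofReal_coe_nnreal]

theorem coe_nnnorm_sq_add_ofReal_sq_mul_coe_nnnorm_sq (x y : ℂ) (t c : ℝ) :
    (‖x‖₊ : ℝ≥0∞) ^ 2 + ENNReal.ofReal (t ^ 2) * (‖(c : ℂ) * y‖₊ : ℝ≥0∞) ^ 2
      = ENNReal.ofReal (‖x‖ ^ 2 + (t * c) ^ 2 * ‖y‖ ^ 2) := by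
  rw [coe_nnnorm_sq_eq_ofReal, coe_nnnorm_sq_eq_ofReal, ← ENNReal.ofReal_mul (sq_nonneg t),
    ← ENNReal.ofReal_add (by positivity) (by positivity), norm_mul, Complex.norm_real,
    Real.norm_eq_abs, mul_pow, sq_abs, mul_pow, mul_assoc]

theorem iInf_lintegral_sub_sq_add_lintegral_mul_sq {Ω : Type*} [MeasurableSpace Ω] (μ : Measure Ω)
    {w : Ω → ℝ} (hw : Measurable w) {f : Ω → ℂ} (hf : MemLp f 2 μ) {t : ℝ} (ht : 0 < t) :
    ⨅ (g : Ω → ℂ) (_ : Measurable g) (_ : MemLp g 2 μ) (_ : MemLp (fun ω => w ω * g ω) 2 μ),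
        ((∫⁻ ω, (‖f ω - g ω‖₊ : ℝ≥0∞) ^ 2 ∂μ) +
          ENNReal.ofReal (t ^ 2) * ∫⁻ ω, (‖w ω * g ω‖₊ : ℝ≥0∞) ^ 2 ∂μ)
      = ∫⁻ ω, ENNReal.ofReal ((t * w ω) ^ 2 / (1 + (t * w ω) ^ 2)) * (‖f ω‖₊ : ℝ≥0∞) ^ 2 ∂μ := by
  have hcost : ∀ g : Ω → ℂ, Measurable g →
      (∫⁻ ω, (‖f ω - g ω‖₊ : ℝ≥0∞) ^ 2 ∂μ) +
          ENNReal.ofReal (t ^ 2) * ∫⁻ ω, (‖w ω * g ω‖₊ : ℝ≥0∞) ^ 2 ∂μ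
        = ∫⁻ ω, ENNReal.ofReal (‖f ω - g ω‖ ^ 2 + (t * w ω) ^ 2 * ‖g ω‖ ^ 2) ∂μ := by
    intro g hg
    have hfm := hf.aestronglyMeasurable.aemeasurable
    rw [← lintegral_const_mul _ (by fun_prop), ← lintegral_add_left' (by fun_prop)]
    simp only [coe_nnnorm_sq_add_ofReal_sq_mul_coe_nnnorm_sq]
  have hrhs : ∀ ω, ENNReal.ofReal ((t * w ω) ^ 2 / (1 + (t * w ω) ^ 2)) * (‖f ω‖₊ : ℝ≥0∞) ^ 2
      = ENNReal.ofReal ((t * w ω) ^ 2 / (1 + (t * w ω) ^ 2) * ‖f ω‖ ^ 2) := fun ω => by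
    rw [coe_nnnorm_sq_eq_ofReal, ENNReal.ofReal_mul (by positivity)]
  simp only [hrhs]
  refine le_antisymm ?_ (le_iInf₂ fun g hg => le_iInf₂ fun _ _ => ?_)
  · -- The minimiser is `f / (1 + (t w)²)`, built from a measurable representative of `f`.
    set f' := hf.aestronglyMeasurable.mk f
    have hf' : Measurable f' := hf.aestronglyMeasurable.stronglyMeasurable_mk.measurable
    set g₀ : Ω → ℂ := fun ω => (1 + (t * w ω) ^ 2)⁻¹ • f' ω
    have hg₀ : Measurable g₀ := by fun_prop
    have hg₀Lp : MemLp g₀ 2 μ := by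
      refine (hf.ae_eq hf.aestronglyMeasurable.ae_eq_mk).of_le_mul (c := 1)
        hg₀.aestronglyMeasurable (ae_of_all _ fun ω => ?_)
      rw [norm_smul, Real.norm_of_nonneg (by positivity), one_mul]
      exact mul_le_of_le_one_left (norm_nonneg _)
        (inv_le_one_of_one_le₀ (le_add_of_nonneg_right (sq_nonneg _)))
    have hwg₀Lp : MemLp (fun ω => w ω * g₀ ω) 2 μ := by
      refine (hf.ae_eq hf.aestronglyMeasurable.ae_eq_mk).of_le_mul (c := (2 * t)⁻¹)
        (by fun_prop) (ae_of_all _ fun ω => ?_)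
      have hweight : |w ω| * (1 + (t * w ω) ^ 2)⁻¹ ≤ (2 * t)⁻¹ := by
        rw [← div_eq_mul_inv, div_le_iff₀ (by positivity), ← sq_abs, abs_mul, abs_of_pos ht]
        field_simp
        nlinarith [sq_nonneg (t * |w ω| - 1)]
      rw [norm_mul, Complex.norm_real, Real.norm_eq_abs, norm_smul,
        Real.norm_of_nonneg (by positivity), ← mul_assoc]
      gcongr
    refine (iInf₂_le g₀ hg₀).trans <| (iInf₂_le hg₀Lp hwg₀Lp).trans ?_
    rw [hcost g₀ hg₀]
    refine (lintegral_congr_ae ?_).le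
    filter_upwards [hf.aestronglyMeasurable.ae_eq_mk] with ω hω
    rw [hω, norm_sub_inv_one_add_smul_sq_add (sq_nonneg _)]
  · rw [hcost g hg]
    exact lintegral_mono fun ω => ENNReal.ofReal_le_ofReal
      (le_norm_sub_sq_add_mul_norm_sq (sq_nonneg _) _ _)

/-- For a σ-finite measure space `(Ω, μ)`, a measurable weight `w : Ω → (0, ∞)`, `0 < θ < 1`
and `f ∈ L²(μ)`, one has, as an identity in `[0, ∞]`:
`∫₀^∞ t^{-2θ-1} inf { ‖f - g‖₂² + t² ‖w g‖₂² : g measurable, g ∈ L², w g ∈ L² } dt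
  = (π / (2 sin πθ)) ∫ w^{2θ} |f|² dμ`. -/
theorem stmt_11 {Ω : Type*} [MeasurableSpace Ω] (μ : Measure Ω) [SigmaFinite μ]
    (w : Ω → ℝ) (hw : Measurable w) (hwpos : ∀ ω, 0 < w ω)
    (θ : ℝ) (hθ : θ ∈ Set.Ioo (0 : ℝ) 1)
    (f : Ω → ℂ) (hf : MemLp f 2 μ) :
    ∫⁻ t in Set.Ioi (0 : ℝ),
        ENNReal.ofReal (t ^ (-2 * θ - 1)) *
          ⨅ (g : Ω → ℂ) (_ : Measurable g) (_ : MemLp g 2 μ)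
            (_ : MemLp (fun ω => w ω * g ω) 2 μ),
            ((∫⁻ ω, (‖f ω - g ω‖₊ : ℝ≥0∞) ^ 2 ∂μ) +
              ENNReal.ofReal (t ^ 2) * ∫⁻ ω, (‖w ω * g ω‖₊ : ℝ≥0∞) ^ 2 ∂μ)
      = ENNReal.ofReal (Real.pi / (2 * Real.sin (Real.pi * θ))) *
          ∫⁻ ω, ENNReal.ofReal (w ω ^ (2 * θ)) * (‖f ω‖₊ : ℝ≥0∞) ^ 2 ∂μ := by
  have hfm := hf.aestronglyMeasurable.aemeasurable
  have hfm_snd : AEMeasurable (fun p : ℝ × Ω => f p.2) ((volume.restrict (Ioi 0)).prod μ) :=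
    hfm.comp_snd
  calc _ = ∫⁻ t in Ioi 0, ∫⁻ ω, ENNReal.ofReal (t ^ (-2 * θ - 1)) *
          (ENNReal.ofReal ((t * w ω) ^ 2 / (1 + (t * w ω) ^ 2)) * (‖f ω‖₊ : ℝ≥0∞) ^ 2) ∂μ := by
        refine setLIntegral_congr_fun measurableSet_Ioi fun t (ht : 0 < t) => ?_
        rw [iInf_lintegral_sub_sq_add_lintegral_mul_sq μ hw hf ht,
          lintegral_const_mul'' _ (by fun_prop)]
    _ = ∫⁻ ω, (∫⁻ t in Ioi 0, ENNReal.ofReal (t ^ (-2 * θ - 1)) *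
          (ENNReal.ofReal ((t * w ω) ^ 2 / (1 + (t * w ω) ^ 2)) * (‖f ω‖₊ : ℝ≥0∞) ^ 2)) ∂μ :=
        lintegral_lintegral_swap (by fun_prop)
    _ = ∫⁻ ω, ENNReal.ofReal (π / (2 * sin (π * θ))) *
          (ENNReal.ofReal (w ω ^ (2 * θ)) * (‖f ω‖₊ : ℝ≥0∞) ^ 2) ∂μ := by
        refine lintegral_congr fun ω => ?_
        simp only [← mul_assoc]
        rw [lintegral_mul_const _ (by fun_prop),
          lintegral_Ioi_rpow_mul_mul_sq_div_one_add_mul_sq hθ.1 hθ.2 (hwpos ω)]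
    _ = _ := lintegral_const_mul' _ _ ENNReal.ofReal_ne_top
end
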